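/- arXiv:1709.05789 — 5 statements merged into one kernel-verified Lean document; each statement's English description precedes it below -/
import Mathlib

section
/- If A is an n × n real positive semidefinite matrix with all diagonal entries equal to 1 (a correlation matrix), then A^{1/2} ∘ A^{1/2} is doubly stochastic, i.e., it has nonnegative entries and all its row sums and column sums equal 1. -/
open Matrix

open scoped ComplexOrder

/-- The positive semidefinite square root of a positive semidefinite matrix, as defined in
Mathlib (December 2024), since removed from Mathlib. -/
noncomputable def Matrix.PosSemidef.sqrt {n 𝕜 : Type*} [Fintype n] [RCLike 𝕜] [DecidableEq n]
    {A : Matrix n n 𝕜} (hA : A.PosSemidef) : Matrix n n 𝕜 :=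
  hA.1.eigenvectorUnitary.1 * diagonal (fun i => ((hA.1.eigenvalues i).sqrt : 𝕜)) *
  (star hA.1.eigenvectorUnitary : Matrix n n 𝕜)

/-! Row and column sums of `A^{1/2} ∘ A^{1/2}` are the diagonal entries of
`A^{1/2} A^{1/2} = A`, because `A^{1/2}` is symmetric. -/

namespace Matrix

section Hadamard

variable {n α : Type*} [Fintype n] [CommSemiring α] {S : Matrix n n α}

theorem IsSymm.sum_hadamard_self_row (hS : S.IsSymm) (i : n) :
    ∑ j, (S ⊙ S) i j = (S * S) i i := by
  simp only [hadamard_apply, mul_apply, hS.apply]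

theorem IsSymm.sum_hadamard_self_col (hS : S.IsSymm) (j : n) :
    ∑ i, (S ⊙ S) i j = (S * S) j j := by
  simp only [hadamard_apply, mul_apply, hS.apply j]

end Hadamard

namespace PosSemidef

variable {n 𝕜 : Type*} [Fintype n] [RCLike 𝕜] [DecidableEq n] {A : Matrix n n 𝕜}

theorem isHermitian_sqrt (hA : A.PosSemidef) : hA.sqrt.IsHermitian := by
  simp only [IsHermitian, PosSemidef.sqrt, conjTranspose_mul, diagonal_conjTranspose,
    Matrix.mul_assoc, star_eq_conjTranspose, conjTranspose_conjTranspose]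
  congr 2
  ext i j
  simp [diagonal_apply]

theorem sqrt_mul_self (hA : A.PosSemidef) : hA.sqrt * hA.sqrt = A := by
  have hU : (star hA.1.eigenvectorUnitary : Matrix n n 𝕜) * hA.1.eigenvectorUnitary.1 = 1 :=
    Unitary.coe_star_mul_self _
  conv_rhs => rw [hA.1.spectral_theorem]
  simp only [PosSemidef.sqrt, Unitary.conjStarAlgAut_apply, Matrix.mul_assoc]
  rw [← Matrix.mul_assoc _ hA.1.eigenvectorUnitary.1, hU, Matrix.one_mul,
    ← Matrix.mul_assoc (diagonal _), diagonal_mul_diagonal]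
  congr 3
  ext i
  simp only [Function.comp_apply, ← RCLike.ofReal_mul, Real.mul_self_sqrt (hA.eigenvalues_nonneg i)]

end PosSemidef

end Matrix

theorem sqrt_hadamard_sqrt_doublyStochastic {n : ℕ} (A : Matrix (Fin n) (Fin n) ℝ)
    (hA : A.PosSemidef) (hdiag : ∀ i, A i i = 1) :
    (∀ i j, 0 ≤ Matrix.hadamard hA.sqrt hA.sqrt i j) ∧
    (∀ i, ∑ j, Matrix.hadamard hA.sqrt hA.sqrt i j = 1) ∧
    (∀ j, ∑ i, Matrix.hadamard hA.sqrt hA.sqrt i j = 1) := by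
  have hsymm : hA.sqrt.IsSymm := by
    simpa [IsHermitian, IsSymm] using hA.isHermitian_sqrt
  refine ⟨fun i j => mul_self_nonneg _, fun i => ?_, fun j => ?_⟩
  · rw [hsymm.sum_hadamard_self_row, hA.sqrt_mul_self, hdiag]
  · rw [hsymm.sum_hadamard_self_col, hA.sqrt_mul_self, hdiag]
end

section
/- For any real m × n matrices A and B of the same size, the largest singular value of the Hadamard product A ∘ B is at most r_max(A) · c_max(B), where r_max(A) is the maximum ℓ₂-norm of a row of A and c_max(B) is the maximum ℓ₂-norm of a column of B. -/
open Matrix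

/-- The largest singular value (ℓ₂ operator norm) of the Hadamard product `A ∘ B`
is at most the maximum row ℓ₂-norm of `A` times the maximum column ℓ₂-norm of `B`. -/
theorem opNorm_hadamard_le_rmax_cmax {m n : ℕ} [NeZero m] [NeZero n]
    (A B : Matrix (Fin m) (Fin n) ℝ) :
    ‖LinearMap.toContinuousLinearMap
        (Matrix.toEuclideanLin (Matrix.hadamard A B))‖ ≤
      (⨆ i : Fin m, Real.sqrt (∑ j, (A i j) ^ 2)) *
      (⨆ j : Fin n, Real.sqrt (∑ i, (B i j) ^ 2)) := by
  set R := ⨆ i : Fin m, Real.sqrt (∑ j, (A i j) ^ 2) with hRdef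
  set C := ⨆ j : Fin n, Real.sqrt (∑ i, (B i j) ^ 2) with hCdef
  have hR : 0 ≤ R := Real.iSup_nonneg fun i => Real.sqrt_nonneg _
  have hC : 0 ≤ C := Real.iSup_nonneg fun j => Real.sqrt_nonneg _
  have hRi : ∀ i, ∑ j, (A i j) ^ 2 ≤ R ^ 2 := by
    intro i
    have h1 : Real.sqrt (∑ j, (A i j) ^ 2) ≤ R := hRdef ▸
      le_ciSup (f := fun i => Real.sqrt (∑ j, (A i j) ^ 2))
        (Set.Finite.bddAbove (Set.finite_range _)) i
    calc ∑ j, (A i j) ^ 2 = (Real.sqrt (∑ j, (A i j) ^ 2)) ^ 2 := by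
          rw [Real.sq_sqrt (Finset.sum_nonneg fun j _ => sq_nonneg _)]
      _ ≤ R ^ 2 := pow_le_pow_left₀ (Real.sqrt_nonneg _) h1 2
  have hCj : ∀ j, ∑ i, (B i j) ^ 2 ≤ C ^ 2 := by
    intro j
    have h1 : Real.sqrt (∑ i, (B i j) ^ 2) ≤ C := hCdef ▸
      le_ciSup (f := fun j => Real.sqrt (∑ i, (B i j) ^ 2))
        (Set.Finite.bddAbove (Set.finite_range _)) j
    calc ∑ i, (B i j) ^ 2 = (Real.sqrt (∑ i, (B i j) ^ 2)) ^ 2 := by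
          rw [Real.sq_sqrt (Finset.sum_nonneg fun i _ => sq_nonneg _)]
      _ ≤ C ^ 2 := pow_le_pow_left₀ (Real.sqrt_nonneg _) h1 2
  apply ContinuousLinearMap.opNorm_le_bound _ (mul_nonneg hR hC)
  intro x
  have hxnorm : ‖x‖ ^ 2 = ∑ j, (x j) ^ 2 := by
    rw [EuclideanSpace.norm_eq, Real.sq_sqrt (Finset.sum_nonneg fun j _ => sq_nonneg _)]
    simp [sq_abs]
  have hkey : ∑ i, (∑ j, A i j * B i j * x j) ^ 2 ≤ (R * C * ‖x‖) ^ 2 := by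
    calc ∑ i, (∑ j, A i j * B i j * x j) ^ 2
        ≤ ∑ i, (∑ j, (A i j) ^ 2) * (∑ j, (B i j * x j) ^ 2) := by
          refine Finset.sum_le_sum fun i _ => ?_
          have := Finset.sum_mul_sq_le_sq_mul_sq Finset.univ (fun j => A i j)
            (fun j => B i j * x j)
          simpa [mul_assoc] using this
      _ ≤ ∑ i, R ^ 2 * (∑ j, (B i j * x j) ^ 2) := by
          refine Finset.sum_le_sum fun i _ => ?_
          exact mul_le_mul_of_nonneg_right (hRi i)
            (Finset.sum_nonneg fun j _ => sq_nonneg _)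
      _ = R ^ 2 * ∑ j, (∑ i, (B i j) ^ 2) * (x j) ^ 2 := by
          rw [← Finset.mul_sum, Finset.sum_comm]
          congr 1
          refine Finset.sum_congr rfl fun j _ => ?_
          rw [Finset.sum_mul]
          exact Finset.sum_congr rfl fun i _ => by ring
      _ ≤ R ^ 2 * ∑ j, C ^ 2 * (x j) ^ 2 := by
          refine mul_le_mul_of_nonneg_left (Finset.sum_le_sum fun j _ => ?_) (sq_nonneg R)
          exact mul_le_mul_of_nonneg_right (hCj j) (sq_nonneg _)
      _ = (R * C * ‖x‖) ^ 2 := by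
          rw [← Finset.mul_sum, ← hxnorm]; ring
  have happ : ‖(LinearMap.toContinuousLinearMap
      (Matrix.toEuclideanLin (Matrix.hadamard A B))) x‖
      = Real.sqrt (∑ i, (∑ j, A i j * B i j * x j) ^ 2) := by
    rw [EuclideanSpace.norm_eq]
    congr 1
    refine Finset.sum_congr rfl fun i _ => ?_
    rw [Real.norm_eq_abs, sq_abs]
    simp [Matrix.toEuclideanLin_apply, Matrix.mulVec, Matrix.hadamard, dotProduct]
  rw [happ]
  calc Real.sqrt (∑ i, (∑ j, A i j * B i j * x j) ^ 2)
      ≤ Real.sqrt ((R * C * ‖x‖) ^ 2) := Real.sqrt_le_sqrt hkey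
    _ = R * C * ‖x‖ := Real.sqrt_sq (by positivity)
end

section
/- Let A be an n × n real symmetric positive definite matrix with eigenvalues in [m, M], and let V be an n × k matrix with orthonormal columns (VᵀV = I_k). Then Vᵀ A² V − (Vᵀ A V)² ≤ (1/4)(M − m)² I_k in the Loewner order. -/
open Matrix

lemma diag_alg {n : ℕ} (U : Matrix (Fin n) (Fin n) ℝ) (hUU : U * star U = 1)
    (hUU' : star U * U = 1) (d : Fin n → ℝ) (c r2 : ℝ) :
    r2 • (1 : Matrix (Fin n) (Fin n) ℝ)
      - (U * diagonal d * star U - c • 1) * (U * diagonal d * star U - c • 1)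
      = U * diagonal (fun i => r2 - (d i - c)^2) * star U := by
  have h1 : ∀ (a : ℝ), a • (1 : Matrix (Fin n) (Fin n) ℝ) = U * (a • 1) * star U := by
    intro a; rw [mul_smul_comm, smul_mul_assoc, mul_one, hUU]
  have conj_mul : ∀ B C : Matrix (Fin n) (Fin n) ℝ,
      (U * B * star U) * (U * C * star U) = U * (B * C) * star U := by
    intro B C
    rw [Matrix.mul_assoc (U * B), Matrix.mul_assoc U C, ← Matrix.mul_assoc (star U), hUU',
      Matrix.one_mul, ← Matrix.mul_assoc, ← Matrix.mul_assoc]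
  rw [h1 r2, h1 c, ← Matrix.sub_mul, ← Matrix.mul_sub, conj_mul, ← Matrix.sub_mul, ← Matrix.mul_sub]
  congr 2
  rw [Matrix.smul_one_eq_diagonal, Matrix.smul_one_eq_diagonal, Matrix.diagonal_sub,
    Matrix.diagonal_mul_diagonal, Matrix.diagonal_sub]
  exact congrArg _ (funext fun i => by ring)

/-- Liu–Neudecker Kantorovich-type inequality: for symmetric positive definite `A`
with eigenvalues in `[m, M]` and `V` with orthonormal columns,
`Vᵀ A² V − (Vᵀ A V)² ≤ (1/4)(M − m)² I`. -/
theorem kantorovich_liu_neudecker {n k : ℕ} (A : Matrix (Fin n) (Fin n) ℝ)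
    (hA : A.PosDef) (m M : ℝ) (hm : 0 < m) (hmM : m ≤ M)
    (hspec : spectrum ℝ A ⊆ Set.Icc m M)
    (V : Matrix (Fin n) (Fin k) ℝ) (hV : Vᵀ * V = 1) :
    (((1 / 4) * (M - m) ^ 2) • (1 : Matrix (Fin k) (Fin k) ℝ) -
      (Vᵀ * (A * A) * V - (Vᵀ * A * V) * (Vᵀ * A * V))).PosSemidef := by
  set c : ℝ := (M + m) / 2 with hc
  set r2 : ℝ := (1 / 4) * (M - m) ^ 2 with hr2
  have hH : A.IsHermitian := hA.isHermitian
  set U : Matrix (Fin n) (Fin n) ℝ := (hH.eigenvectorUnitary : Matrix (Fin n) (Fin n) ℝ) with hUdef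
  have hUU : U * star U = 1 := (Matrix.mem_unitaryGroup_iff).mp hH.eigenvectorUnitary.2
  have hUU' : star U * U = 1 := (Matrix.mem_unitaryGroup_iff').mp hH.eigenvectorUnitary.2
  have hU : A = U * diagonal hH.eigenvalues * star U := by
    have := hH.spectral_theorem
    simpa using this
  -- Step 1: r2 • 1 - (A - c•1)^2 is PSD
  have hPSD1 : (r2 • (1 : Matrix (Fin n) (Fin n) ℝ)
      - (A - c • 1) * (A - c • 1)).PosSemidef := by
    rw [hU, diag_alg U hUU hUU' hH.eigenvalues c r2]
    have hd : 0 ≤ fun i => r2 - (hH.eigenvalues i - c) ^ 2 := by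
      intro i
      have h1 : hH.eigenvalues i ∈ Set.Icc m M := hspec (hH.eigenvalues_mem_spectrum_real i)
      obtain ⟨h2, h3⟩ := h1
      simp only [Pi.zero_apply, hr2, hc]
      nlinarith
    have := (Matrix.PosSemidef.diagonal hd).mul_mul_conjTranspose_same U
    simpa [Matrix.star_eq_conjTranspose] using this
  -- conjugation by V preserves PSD
  have hVconj : (Vᵀ * (r2 • (1 : Matrix (Fin n) (Fin n) ℝ)
      - (A - c • 1) * (A - c • 1)) * V).PosSemidef := by
    have := hPSD1.mul_mul_conjTranspose_same Vᵀ
    have hVT : (Vᵀ)ᴴ = V := by ext i j; simp [Matrix.conjTranspose_apply]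
    rwa [hVT] at this
  -- square term PSD
  have hBherm : (Vᵀ * A * V - c • 1)ᴴ = Vᵀ * A * V - c • 1 := by
    have hAH : Aᴴ = A := hH.eq
    have hVT : (Vᵀ)ᴴ = V := by ext i j; simp [Matrix.conjTranspose_apply]
    have hVH : Vᴴ = Vᵀ := by ext i j; simp [Matrix.conjTranspose_apply]
    have hAT : Aᵀ = A := by
      ext i j; simpa using congrFun (congrFun hAH i) j
    simp [Matrix.conjTranspose_sub, Matrix.conjTranspose_mul, hAH, hAT, hVT, hVH,
      Matrix.mul_assoc]
  have hSq : ((Vᵀ * A * V - c • 1) * (Vᵀ * A * V - c • 1)).PosSemidef := by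
    have := Matrix.posSemidef_conjTranspose_mul_self (Vᵀ * A * V - c • 1)
    rwa [hBherm] at this
  -- decomposition
  have hdec : r2 • (1 : Matrix (Fin k) (Fin k) ℝ) -
      (Vᵀ * (A * A) * V - (Vᵀ * A * V) * (Vᵀ * A * V))
      = (Vᵀ * A * V - c • 1) * (Vᵀ * A * V - c • 1)
        + Vᵀ * (r2 • (1 : Matrix (Fin n) (Fin n) ℝ) - (A - c • 1) * (A - c • 1)) * V := by
    simp only [Matrix.mul_sub, Matrix.sub_mul, Matrix.smul_mul, Matrix.mul_smul,
      smul_sub, Matrix.mul_one, Matrix.one_mul, Matrix.mul_assoc, hV]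
    module
  rw [hdec]
  exact hSq.add hVconj
end

section
/- Let A and B be n × n real symmetric positive definite matrices, and let m and M be such that all eigenvalues of the Kronecker product A ⊗ B lie in [m, M]. Then A² ∘ B² ≤ (A ∘ B)² + (1/4)(M − m)² I_n in the Loewner order. -/
open Matrix Kronecker

/-- Kantorovich inequality for Hadamard products: if the eigenvalues of `A ⊗ B`
lie in `[m, M]`, then `A² ∘ B² ≤ (A ∘ B)² + (1/4)(M − m)² I`. -/
theorem kantorovich_hadamard {n : ℕ} (A B : Matrix (Fin n) (Fin n) ℝ)
    (hA : A.PosDef) (hB : B.PosDef) (m M : ℝ) (hm : 0 < m) (hmM : m ≤ M)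
    (hspec : spectrum ℝ (A ⊗ₖ B) ⊆ Set.Icc m M) :
    ((Matrix.hadamard A B * Matrix.hadamard A B +
        ((1 / 4) * (M - m) ^ 2) • (1 : Matrix (Fin n) (Fin n) ℝ)) -
      Matrix.hadamard (A * A) (B * B)).PosSemidef := by
  classical
  set K : Matrix (Fin n × Fin n) (Fin n × Fin n) ℝ := A ⊗ₖ B with hKdef
  have hA' : ∀ i j, A j i = A i j := fun i j => by
    have := congrFun (congrFun hA.isHermitian i) j
    simpa [conjTranspose_apply] using this
  have hB' : ∀ i j, B j i = B i j := fun i j => by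
    have := congrFun (congrFun hB.isHermitian i) j
    simpa [conjTranspose_apply] using this
  -- K is hermitian
  have hK : K.IsHermitian := by
    ext p q
    simp only [conjTranspose_apply, hKdef, kroneckerMap_apply, star_trivial]
    rw [hA', hB']
  -- compression matrix
  set P : Matrix (Fin n) (Fin n × Fin n) ℝ :=
    Matrix.of (fun i p => if p = (i, i) then (1 : ℝ) else 0) with hPdef
  have hPapply : ∀ (X : Matrix (Fin n × Fin n) (Fin n × Fin n) ℝ) (i j : Fin n),
      (P * X * Pᴴ) i j = X (i, i) (j, j) := by
    intro X i j
    simp [Matrix.mul_apply, hPdef, conjTranspose_apply, Finset.sum_ite_eq, ite_mul, mul_ite]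
  have hPP : P * Pᴴ = 1 := by
    ext i j
    simp only [Matrix.mul_apply, hPdef, conjTranspose_apply, Matrix.of_apply, ite_mul, mul_ite,
      one_mul, mul_one, zero_mul, mul_zero, Matrix.one_apply]
    rw [Finset.sum_ite_eq' Finset.univ ((i, i) : Fin n × Fin n)]
    simp [Prod.ext_iff]
  -- the middle polynomial matrix
  set t : ℝ := (M + m) / 2 with htdef
  set Q : Matrix (Fin n × Fin n) (Fin n × Fin n) ℝ :=
    (M + m) • K - (m * M) • 1 - K * K with hQdef
  have hQps : Q.PosSemidef := by
    have hU : (hK.eigenvectorUnitary : Matrix (Fin n × Fin n) (Fin n × Fin n) ℝ) *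
        star (hK.eigenvectorUnitary : Matrix (Fin n × Fin n) (Fin n × Fin n) ℝ) = 1 :=
      (Matrix.mem_unitaryGroup_iff).mp hK.eigenvectorUnitary.2
    have hU' : star (hK.eigenvectorUnitary : Matrix (Fin n × Fin n) (Fin n × Fin n) ℝ) *
        (hK.eigenvectorUnitary : Matrix (Fin n × Fin n) (Fin n × Fin n) ℝ) = 1 :=
      (Matrix.mem_unitaryGroup_iff').mp hK.eigenvectorUnitary.2
    set U : Matrix (Fin n × Fin n) (Fin n × Fin n) ℝ := (hK.eigenvectorUnitary : Matrix (Fin n × Fin n) (Fin n × Fin n) ℝ)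
    set d : (Fin n × Fin n) → ℝ := hK.eigenvalues with hddef
    have hKspec : K = U * diagonal d * star U := by
      have := hK.spectral_theorem
      simpa using this
    have hQeq : Q = U * diagonal (fun p => (M + m) * d p - m * M - d p * d p) * star U := by
      rw [hQdef, hKspec]
      have hKK : (U * diagonal d * star U) * (U * diagonal d * star U)
          = U * diagonal (fun p => d p * d p) * star U := by
        calc (U * diagonal d * star U) * (U * diagonal d * star U)
            = U * diagonal d * (star U * U) * diagonal d * star U := by
              simp only [Matrix.mul_assoc]
          _ = U * (diagonal d * diagonal d) * star U := by
              rw [hU']; simp only [Matrix.mul_one, Matrix.mul_assoc]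
          _ = U * diagonal (fun p => d p * d p) * star U := by
              rw [Matrix.diagonal_mul_diagonal]
      have hmid : (M + m) • diagonal d - (m * M) • diagonal (fun _ => (1:ℝ))
          - diagonal (fun p => d p * d p)
          = diagonal (fun p => (M + m) * d p - m * M - d p * d p) := by
        ext p q
        rcases eq_or_ne p q with rfl | h
        · simp [Matrix.diagonal_apply_eq]
        · simp [Matrix.diagonal_apply_ne _ h, Matrix.one_apply_ne h]
      have expand : ∀ (X Y Z : Matrix (Fin n × Fin n) (Fin n × Fin n) ℝ),
          U * (X - Y - Z) * star U = U * X * star U - U * Y * star U - U * Z * star U := by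
        intro X Y Z
        rw [Matrix.mul_sub, Matrix.mul_sub, Matrix.sub_mul, Matrix.sub_mul]
      have e1 : U * ((M + m) • diagonal d) * star U = (M + m) • (U * diagonal d * star U) := by
        rw [Matrix.mul_smul, Matrix.smul_mul]
      have e2 : U * ((m * M) • diagonal (fun _ => (1:ℝ))) * star U
          = (m * M) • (1 : Matrix (Fin n × Fin n) (Fin n × Fin n) ℝ) := by
        rw [Matrix.mul_smul, Matrix.smul_mul]
        congr 1
        have : diagonal (fun _ : Fin n × Fin n => (1:ℝ)) = 1 := Matrix.diagonal_one
        rw [this, Matrix.mul_one, hU]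
      have e3 : U * diagonal (fun p => d p * d p) * star U
          = (U * diagonal d * star U) * (U * diagonal d * star U) := hKK.symm
      rw [← hmid, expand, e1, e2, e3]
    rw [hQeq, star_eq_conjTranspose]
    refine Matrix.PosSemidef.mul_mul_conjTranspose_same ?_ U
    refine Matrix.posSemidef_diagonal_iff.mpr fun p => ?_
    have hp := hspec (hK.eigenvalues_mem_spectrum_real p)
    obtain ⟨h1, h2⟩ := hp
    nlinarith [h1, h2]
  -- compress
  have hPQ : (P * Q * Pᴴ).PosSemidef := hQps.mul_mul_conjTranspose_same P
  -- identify compressed pieces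
  have hHad : P * K * Pᴴ = Matrix.hadamard A B := by
    ext i j
    rw [hPapply]
    simp [hKdef, Matrix.hadamard]
  have hHad2 : P * (K * K) * Pᴴ = Matrix.hadamard (A * A) (B * B) := by
    have : K * K = (A * A) ⊗ₖ (B * B) := by
      rw [hKdef, Matrix.mul_kronecker_mul]
    rw [this]
    ext i j
    rw [hPapply]
    simp [Matrix.hadamard]
  have hPQeq : P * Q * Pᴴ = (M + m) • Matrix.hadamard A B - (m * M) • (1 : Matrix (Fin n) (Fin n) ℝ)
      - Matrix.hadamard (A * A) (B * B) := by
    rw [hQdef]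
    rw [Matrix.mul_sub, Matrix.sub_mul, Matrix.mul_sub, Matrix.sub_mul]
    rw [Matrix.mul_smul, Matrix.smul_mul, Matrix.mul_smul, Matrix.smul_mul]
    rw [Matrix.mul_one, hPP, hHad, hHad2]
  -- square term
  set H : Matrix (Fin n) (Fin n) ℝ := Matrix.hadamard A B with hHdef
  set S : Matrix (Fin n) (Fin n) ℝ := H - t • 1 with hSdef
  have hHh : H.IsHermitian := by
    ext i j
    simp only [conjTranspose_apply, hHdef, Matrix.hadamard_apply, star_trivial]
    rw [hA', hB']
  have hSherm : S.IsHermitian := by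
    unfold Matrix.IsHermitian
    rw [hSdef, conjTranspose_sub, hHh.eq, conjTranspose_smul, conjTranspose_one, star_trivial]
  have hSps : (S * S).PosSemidef := by
    have := Matrix.posSemidef_conjTranspose_mul_self S
    rwa [hSherm.eq] at this
  -- final identity
  have hfinal : (H * H + ((1 / 4) * (M - m) ^ 2) • (1 : Matrix (Fin n) (Fin n) ℝ))
      - Matrix.hadamard (A * A) (B * B) = (P * Q * Pᴴ) + S * S := by
    rw [hPQeq, hSdef]
    simp only [Matrix.sub_mul, Matrix.mul_sub, Matrix.smul_mul, Matrix.mul_smul, Matrix.mul_one,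
      Matrix.one_mul, smul_smul]
    have ht1 : (M + m) - 2 * t = 0 := by rw [htdef]; ring
    have ht2 : t * t - m * M = (1 / 4) * (M - m) ^ 2 := by rw [htdef]; ring
    module
  rw [hfinal]
  exact hPQ.add hSps
end

section
/- Let A and B be m × n real matrices with unit ℓ₂-norm columns satisfying the restricted isometry property of order k with constants δ_k(A), δ_k(B) ∈ (0,1), and let δ = max(δ_k(A), δ_k(B)). Then the columnwise Khatri-Rao product A ⊙ B satisfies the restricted isometry property of order k with constant at most δ², i.e., for every k-sparse z ∈ ℝⁿ, (1 − δ²)‖z‖₂² ≤ ‖(A ⊙ B)z‖₂² ≤ (1 + δ²)‖z‖₂². -/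
open Matrix
open scoped Classical

/-- Columnwise Khatri-Rao product of two `m × n` matrices. -/
def khatriRao {m n : ℕ} (A B : Matrix (Fin m) (Fin n) ℝ) :
    Matrix (Fin m × Fin m) (Fin n) ℝ :=
  fun p j => A p.1 j * B p.2 j

/-- `z` has at most `k` nonzero entries. -/
def IsSparse {n : ℕ} (k : ℕ) (z : Fin n → ℝ) : Prop :=
  (Finset.univ.filter fun i => z i ≠ 0).card ≤ k

/-- `Φ` satisfies the RIP of order `k` with constant `δ`. -/
def SatisfiesRIP {ι : Type*} [Fintype ι] {n : ℕ} (Φ : Matrix ι (Fin n) ℝ)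
    (k : ℕ) (δ : ℝ) : Prop :=
  ∀ z : Fin n → ℝ, IsSparse k z →
    (1 - δ) * ∑ i, (z i) ^ 2 ≤ ∑ p, (Φ.mulVec z p) ^ 2 ∧
    ∑ p, (Φ.mulVec z p) ^ 2 ≤ (1 + δ) * ∑ i, (z i) ^ 2

/-!
Write `G = Φᵀ Φ` for the Gram matrix. The RIP of order `k` with constant `δ` says exactly that
every principal submatrix of `G - 1` on at most `k` indices has quadratic form bounded by `δ` in
absolute value. The Gram matrix of `A ⊙ B` is the Hadamard product `AᵀA ⊙ BᵀB`, and since the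
columns have unit norm, `AᵀA ⊙ BᵀB - 1 = M ⊙ N` with `M = AᵀA - 1`, `N = BᵀB - 1` hollow.
On the support of a `k`-sparse vector the matrices `δ - M` and `δ ± N` are positive
semidefinite, hence so are their Hadamard products `δ² ∓ M ⊙ N` (Schur product theorem),
which is the RIP bound with constant `δ²`.
-/

theorem sum_mulVec_sq_eq_dotProduct {ι κ R : Type*} [Fintype ι] [Fintype κ] [CommSemiring R]
    (Φ : Matrix ι κ R) (z : κ → R) : ∑ p, (Φ *ᵥ z) p ^ 2 = z ⬝ᵥ ((Φᵀ * Φ) *ᵥ z) := by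
  rw [← mulVec_mulVec, dotProduct_mulVec, vecMul_transpose]
  simp only [dotProduct, sq]

theorem transpose_mul_self_apply_self {ι κ R : Type*} [Fintype ι] [Semiring R]
    (A : Matrix ι κ R) (j : κ) : (Aᵀ * A) j j = ∑ i, A i j ^ 2 := by
  simp [mul_apply, sq]

theorem isSymm_transpose_mul_self_sub_one {ι κ R : Type*} [Fintype ι] [DecidableEq κ]
    [CommRing R] (A : Matrix ι κ R) : (Aᵀ * A - 1).IsSymm := by
  simp [IsSymm, transpose_mul]

theorem hadamard_sub_one {ι R : Type*} [DecidableEq ι] [NonAssocRing R] {G H : Matrix ι ι R}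
    (hG : ∀ i, G i i = 1) (hH : ∀ i, H i i = 1) : (G - 1) ⊙ (H - 1) = G ⊙ H - 1 := by
  ext i j
  rcases eq_or_ne i j with rfl | hij
  · simp [hG, hH]
  · simp [hij]

theorem khatriRao_transpose_mul_self {m n : ℕ} (A B : Matrix (Fin m) (Fin n) ℝ) :
    (khatriRao A B)ᵀ * khatriRao A B = (Aᵀ * A) ⊙ (Bᵀ * B) := by
  ext i j
  simp only [mul_apply, transpose_apply, hadamard_apply, khatriRao, Fintype.sum_prod_type,
    Finset.sum_mul_sum]
  exact Finset.sum_congr rfl fun a _ => Finset.sum_congr rfl fun b _ => by ring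

theorem Finset.sum_coe_sort_of_eq_zero {ι M : Type*} [Fintype ι] [AddCommMonoid M]
    {S : Finset ι} {f : ι → M} (hf : ∀ i ∉ S, f i = 0) : ∑ i : S, f i = ∑ i, f i := by
  rw [Finset.sum_coe_sort S f]
  exact Finset.sum_subset (Finset.subset_univ S) fun i _ hi => hf i hi

section Restrict

variable {ι R : Type*} [Fintype ι] [NonUnitalNonAssocSemiring R] {S : Finset ι} {z : ι → R}

theorem dotProduct_comp_val (hz : ∀ i ∉ S, z i = 0) (w : ι → R) :
    (z ∘ (↑) : S → R) ⬝ᵥ (w ∘ (↑)) = z ⬝ᵥ w := by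
  simp only [dotProduct, Function.comp_apply]
  exact Finset.sum_coe_sort_of_eq_zero (f := fun i => z i * w i) fun i hi => by simp [hz i hi]

theorem submatrix_mulVec_comp_val (G : Matrix ι ι R) (hz : ∀ i ∉ S, z i = 0) :
    G.submatrix ((↑) : S → ι) ((↑) : S → ι) *ᵥ (z ∘ (↑)) = (G *ᵥ z) ∘ (↑) := by
  ext i
  simp only [mulVec, dotProduct, submatrix_apply, Function.comp_apply]
  exact Finset.sum_coe_sort_of_eq_zero (f := fun j => G i j * z j) fun j hj => by simp [hz j hj]

end Restrict

section RIP

variable {ι : Type*} [Fintype ι] {n k : ℕ} {Φ : Matrix ι (Fin n) ℝ} {δ : ℝ}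

theorem satisfiesRIP_iff :
    SatisfiesRIP Φ k δ ↔ ∀ z, IsSparse k z → |z ⬝ᵥ ((Φᵀ * Φ - 1) *ᵥ z)| ≤ δ * (z ⬝ᵥ z) := by
  have hsq : ∀ z : Fin n → ℝ, ∑ i, z i ^ 2 = z ⬝ᵥ z := fun z => by simp only [dotProduct, sq]
  simp only [SatisfiesRIP, ← mulVec_mulVec, sum_mulVec_sq_eq_dotProduct, hsq, sub_mulVec,
    one_mulVec, dotProduct_sub, abs_le]
  refine forall₂_congr fun z _ => ?_
  constructor <;> rintro ⟨h₁, h₂⟩ <;> constructor <;> linarith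

theorem SatisfiesRIP.mono {δ' : ℝ} (hΦ : SatisfiesRIP Φ k δ) (hδ : δ ≤ δ') :
    SatisfiesRIP Φ k δ' := by
  rw [satisfiesRIP_iff] at hΦ ⊢
  exact fun z hz => (hΦ z hz).trans
    (mul_le_mul_of_nonneg_right hδ (Finset.sum_nonneg fun i _ => mul_self_nonneg (z i)))

theorem SatisfiesRIP.abs_dotProduct_submatrix_mulVec_le (hΦ : SatisfiesRIP Φ k δ)
    {S : Finset (Fin n)} (hS : S.card ≤ k) (x : S → ℝ) :
    |x ⬝ᵥ ((Φᵀ * Φ - 1).submatrix (↑) (↑) *ᵥ x)| ≤ δ * (x ⬝ᵥ x) := by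
  set z : Fin n → ℝ := fun i => if h : i ∈ S then x ⟨i, h⟩ else 0
  have hz : ∀ i ∉ S, z i = 0 := fun i hi => dif_neg hi
  have hx : z ∘ (↑) = x := funext fun i => dif_pos i.2
  have hsparse : IsSparse k z :=
    (Finset.card_le_card fun i hi => by by_contra hiS; simp [hz i hiS] at hi).trans hS
  rw [← hx, submatrix_mulVec_comp_val _ hz, dotProduct_comp_val hz, dotProduct_comp_val hz]
  exact satisfiesRIP_iff.1 hΦ z hsparse

end RIP

section Hadamard

variable {ι : Type*} [Fintype ι] [DecidableEq ι] {M N : Matrix ι ι ℝ} {δ : ℝ}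

theorem posSemidef_smul_one_sub_of_dotProduct_mulVec_le (hM : M.IsSymm)
    (h : ∀ x, x ⬝ᵥ (M *ᵥ x) ≤ δ * (x ⬝ᵥ x)) : (δ • 1 - M).PosSemidef := by
  refine .of_dotProduct_mulVec_nonneg ?_ fun x => ?_
  · rw [isHermitian_iff_isSymm]
    exact (isSymm_one.smul δ).sub hM
  · simp only [star_trivial, sub_mulVec, smul_mulVec, one_mulVec, dotProduct_sub,
      dotProduct_smul, smul_eq_mul]
    linarith [h x]

theorem dotProduct_hadamard_mulVec_le (hM0 : ∀ i, M i i = 0) (hN0 : ∀ i, N i i = 0)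
    (hM : (δ • 1 - M).PosSemidef) (hN : (δ • 1 + N).PosSemidef) (x : ι → ℝ) :
    x ⬝ᵥ ((M ⊙ N) *ᵥ x) ≤ δ ^ 2 * (x ⬝ᵥ x) := by
  have hMN : (δ • 1 - M) ⊙ (δ • 1 + N) = δ ^ 2 • 1 - M ⊙ N := by
    ext i j
    rcases eq_or_ne i j with rfl | hij
    · simp [hM0, hN0, sq]
    · simp [hij]
  have := (hM.hadamard hN).dotProduct_mulVec_nonneg x
  simp only [hMN, star_trivial, sub_mulVec, smul_mulVec, one_mulVec, dotProduct_sub,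
      dotProduct_smul, smul_eq_mul] at this
  linarith

theorem abs_dotProduct_hadamard_mulVec_le (hM : M.IsSymm) (hN : N.IsSymm)
    (hM0 : ∀ i, M i i = 0) (hN0 : ∀ i, N i i = 0)
    (hMδ : ∀ x, |x ⬝ᵥ (M *ᵥ x)| ≤ δ * (x ⬝ᵥ x)) (hNδ : ∀ x, |x ⬝ᵥ (N *ᵥ x)| ≤ δ * (x ⬝ᵥ x))
    (x : ι → ℝ) : |x ⬝ᵥ ((M ⊙ N) *ᵥ x)| ≤ δ ^ 2 * (x ⬝ᵥ x) := by
  have hMpsd := posSemidef_smul_one_sub_of_dotProduct_mulVec_le hM fun y => (abs_le.1 (hMδ y)).2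
  have hNpsd := posSemidef_smul_one_sub_of_dotProduct_mulVec_le hN.neg fun y => by
    simpa [neg_mulVec] using neg_le.1 (abs_le.1 (hNδ y)).1
  have hNpsd' := posSemidef_smul_one_sub_of_dotProduct_mulVec_le hN fun y => (abs_le.1 (hNδ y)).2
  rw [sub_neg_eq_add] at hNpsd
  rw [sub_eq_add_neg] at hNpsd'
  have upper := dotProduct_hadamard_mulVec_le hM0 hN0 hMpsd hNpsd x
  have lower := dotProduct_hadamard_mulVec_le hM0 (fun i => neg_eq_zero.2 (hN0 i)) hMpsd hNpsd' x
  have hneg : M ⊙ (-N) = -(M ⊙ N) := by ext; simp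
  rw [hneg, neg_mulVec, dotProduct_neg] at lower
  exact abs_le.2 ⟨by linarith, upper⟩

end Hadamard

theorem ric_bound_khatriRao_general {m n : ℕ} (A B : Matrix (Fin m) (Fin n) ℝ)
    (k : ℕ)
    (hAcol : ∀ j, ∑ i, (A i j) ^ 2 = 1) (hBcol : ∀ j, ∑ i, (B i j) ^ 2 = 1)
    (δA δB : ℝ)
    (hA : SatisfiesRIP A k δA) (hB : SatisfiesRIP B k δB) :
    SatisfiesRIP (khatriRao A B) k ((max δA δB) ^ 2) := by
  have hGA : ∀ j, (Aᵀ * A) j j = 1 := fun j => (transpose_mul_self_apply_self A j).trans (hAcol j)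
  have hGB : ∀ j, (Bᵀ * B) j j = 1 := fun j => (transpose_mul_self_apply_self B j).trans (hBcol j)
  refine satisfiesRIP_iff.2 fun z hz => ?_
  set S := Finset.univ.filter fun i => z i ≠ 0
  have hzS : ∀ i ∉ S, z i = 0 := by simp [S]
  have hMδ := (hA.mono (le_max_left δA δB)).abs_dotProduct_submatrix_mulVec_le hz
  have hNδ := (hB.mono (le_max_right δA δB)).abs_dotProduct_submatrix_mulVec_le hz
  have key := abs_dotProduct_hadamard_mulVec_le
    ((isSymm_transpose_mul_self_sub_one A).submatrix ((↑) : S → Fin n))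
    ((isSymm_transpose_mul_self_sub_one B).submatrix ((↑) : S → Fin n))
    (fun i => by simp [hGA]) (fun i => by simp [hGB]) hMδ hNδ (z ∘ (↑))
  rwa [← submatrix_hadamard, hadamard_sub_one hGA hGB, ← khatriRao_transpose_mul_self,
    submatrix_mulVec_comp_val _ hzS, dotProduct_comp_val hzS, dotProduct_comp_val hzS] at key

/-- Deterministic RIC bound for the Khatri-Rao product: if `A`, `B` have unit-norm
columns and satisfy `k`-RIP with constants `δA, δB ∈ (0,1)`, then `A ⊙ B` satisfies
`k`-RIP with constant at most `δ² = max(δA, δB)²`. -/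
theorem ric_bound_khatriRao {m n : ℕ} (A B : Matrix (Fin m) (Fin n) ℝ)
    (k : ℕ) (hk : k ≤ m)
    (hAcol : ∀ j, ∑ i, (A i j) ^ 2 = 1) (hBcol : ∀ j, ∑ i, (B i j) ^ 2 = 1)
    (δA δB : ℝ) (hδA : δA ∈ Set.Ioo (0 : ℝ) 1) (hδB : δB ∈ Set.Ioo (0 : ℝ) 1)
    (hA : SatisfiesRIP A k δA) (hB : SatisfiesRIP B k δB) :
    SatisfiesRIP (khatriRao A B) k ((max δA δB) ^ 2) :=
  ric_bound_khatriRao_general A B k hAcol hBcol δA δB hA hB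
end
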